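/- Let V₁, …, V_l be subspaces of a finite-dimensional complex inner product space E satisfying the non-intersection conditions V_{j+1} ∩ V_j⊥ = {0} for all j = 1, …, l−1. Then the kernel of the composition T_{V_l}(0) ∘ ⋯ ∘ T_{V_1}(0) = Π_{V_l⊥} ∘ ⋯ ∘ Π_{V_1⊥} equals V₁. -/

import Mathlib

/-!
Induct on `l`. The partial composition `P = Π_{V_l⊥} ∘ ⋯ ∘ Π_{V_1⊥}` takes values in `V_l⊥`, and
`Π_{V_{l+1}⊥}` kills exactly `V_{l+1}`; since `V_{l+1} ∩ V_l⊥ = 0`, composing with `Π_{V_{l+1}⊥}`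
does not enlarge the kernel of `P`.
-/

noncomputable def projL {E : Type*} [NormedAddCommGroup E] [InnerProductSpace ℂ E]
    [FiniteDimensional ℂ E] (V : Submodule ℂ E) : E →ₗ[ℂ] E :=
  V.subtype ∘ₗ V.orthogonalProjectionOnto.toLinearMap

noncomputable def TV {E : Type*} [NormedAddCommGroup E] [InnerProductSpace ℂ E]
    [FiniteDimensional ℂ E] (V : Submodule ℂ E) (z : ℂ) : E →ₗ[ℂ] E :=
  z • projL V + projL Vᗮ

variable {E : Type*} [NormedAddCommGroup E] [InnerProductSpace ℂ E] [FiniteDimensional ℂ E]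

theorem List.prod_reverse_ofFn_succ {M : Type*} [Monoid M] {n : ℕ} (f : Fin (n + 1) → M) :
    (List.ofFn f).reverse.prod =
      f (Fin.last n) * (List.ofFn fun i => f i.castSucc).reverse.prod := by
  rw [List.ofFn_succ', List.concat_eq_append, List.reverse_append, List.reverse_singleton,
    List.singleton_append, List.prod_cons]

theorem LinearMap.ker_comp_of_disjoint_range_ker {R M N P : Type*} [Semiring R]
    [AddCommMonoid M] [AddCommMonoid N] [AddCommMonoid P] [Module R M] [Module R N] [Module R P]
    {f : M →ₗ[R] N} {g : N →ₗ[R] P} (h : Disjoint (range f) (ker g)) :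
    ker (g ∘ₗ f) = ker f :=
  le_antisymm (fun x hx => h.le_bot ⟨mem_range_self f x, hx⟩) (ker_le_ker_comp f g)

theorem TV_zero (V : Submodule ℂ E) : TV V 0 = (Vᗮ.starProjection : E →ₗ[ℂ] E) := by
  simp [TV, projL, Submodule.starProjection]

theorem ker_TV_zero (V : Submodule ℂ E) : LinearMap.ker (TV V 0) = V := by
  simp [TV_zero]

theorem range_TV_zero (V : Submodule ℂ E) : LinearMap.range (TV V 0) = Vᗮ := by
  simp [TV_zero]

theorem range_prod_TV_zero_le {n : ℕ} (V : Fin (n + 1) → Submodule ℂ E) :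
    LinearMap.range
      ((List.ofFn fun j : Fin (n + 1) => (TV (V j) 0 : Module.End ℂ E)).reverse.prod
        : E →ₗ[ℂ] E) ≤ (V (Fin.last n))ᗮ := by
  rw [List.prod_reverse_ofFn_succ, Module.End.mul_eq_comp, ← range_TV_zero]
  exact LinearMap.range_comp_le_range _ _

/-- The composition T_{V_l}(0) ∘ ⋯ ∘ T_{V_1}(0): the list [T_{V_l},…,T_{V_1}] multiplied
as endomorphisms (product = composition). -/
theorem ker_comp_proj (l : ℕ) (V : Fin (l + 1) → Submodule ℂ E)
    (hV : ∀ j : Fin l, V j.succ ⊓ (V j.castSucc)ᗮ = ⊥) :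
    LinearMap.ker
      ((List.ofFn fun j : Fin (l + 1) => (TV (V j) 0 : Module.End ℂ E)).reverse.prod
        : E →ₗ[ℂ] E) = V 0 := by
  induction l with
  | zero => simp [ker_TV_zero]
  | succ l ih =>
    rw [List.prod_reverse_ofFn_succ, Module.End.mul_eq_comp,
      LinearMap.ker_comp_of_disjoint_range_ker, ih _ fun j => by simpa using hV j.castSucc,
      Fin.castSucc_zero]
    refine Disjoint.mono_left (range_prod_TV_zero_le _) ?_
    rw [ker_TV_zero, ← Fin.succ_last, disjoint_iff, inf_comm, hV]
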